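/- Let N ≥ 1, let λ > 0 and c* > 0, let σ be the uniform probability measure on the unit sphere S^{N−1} of ℝ^N, and for R ≥ 0 define (T_R u)(x) := ∫_{S^{N−1}} u(x + R·y) dσ(y). Suppose (c,x) ↦ u_c(x) is a continuous and bounded function on (0,c*) × ℝ^N. For c ∈ (0,c*) set τ_c := λ/c, for t > 0 let n_c(t) be the unique m ∈ ℕ with m·τ_c < t ≤ (m+1)·τ_c, set R_c(t) := c·(t − n_c(t)·τ_c), and define v_c(x,t) := (T_{R_c(t)}((T_λ)^{n_c(t)} u_c))(x) (note c·τ_c = λ). Then for every fixed x ∈ ℝ^N and t > 0, the map c ↦ v_c(x,t) is continuous on (0,c*). -/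

import Mathlib

open MeasureTheory

/-- The uniform probability measure on the unit sphere of `ℝ^N`, viewed as a measure
on `ℝ^N` (the normalized surface measure, pushed forward along the inclusion). -/
noncomputable def sphereUniform (N : ℕ) : Measure (EuclideanSpace ℝ (Fin N)) :=
  ((volume : Measure (EuclideanSpace ℝ (Fin N))).toSphere Set.univ)⁻¹ •
    Measure.map (Subtype.val : Metric.sphere (0 : EuclideanSpace ℝ (Fin N)) 1 → _)
      (volume : Measure (EuclideanSpace ℝ (Fin N))).toSphere

/-- The spherical mean operator `(T_R u)(x) = ∫_{S^{N-1}} u (x + R y) dσ(y)`. -/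
noncomputable def sphMean (N : ℕ) (R : ℝ) (u : EuclideanSpace ℝ (Fin N) → ℝ)
    (x : EuclideanSpace ℝ (Fin N)) : ℝ :=
  ∫ y, u (x + R • y) ∂(sphereUniform N)
/-- For `t, τ > 0`, the unique `m ∈ ℕ` with `m τ < t ≤ (m+1) τ`. -/
noncomputable def stepIndex (τ t : ℝ) : ℕ := ⌈t / τ⌉₊ - 1


/-! On the `m`-th time slab `m τ_c < t ≤ (m + 1) τ_c`, i.e. `m < c t / λ ≤ m + 1`, one has
`v_c(x, t) = T_{c t - m λ} (T_λ^m u_c) (x)`. This is continuous in `c` by dominated convergence,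
since spherical means are averages against a probability measure and so every iterate
`T_λ^m u_c` stays bounded by the bound on `u` and jointly continuous in `(c, x)`. At a slab
boundary `c t = (m + 1) λ` the neighbouring formulas agree because
`T_λ (T_λ^m u_c) = T_0 (T_λ^(m+1) u_c)`, so the pieces glue to a continuous function. -/

open MeasureTheory Set Filter Topology

section SphericalMean

variable {N : ℕ}

lemma isProbabilityMeasure_sphereUniform (hN : 1 ≤ N) :
    IsProbabilityMeasure (sphereUniform N) := by
  have hpos : (volume : Measure (EuclideanSpace ℝ (Fin N))).toSphere univ ≠ 0 := by
    rw [Measure.toSphere_apply_univ, finrank_euclideanSpace, Fintype.card_fin]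
    exact mul_ne_zero (by exact_mod_cast (Nat.one_le_iff_ne_zero.mp hN))
      (Metric.measure_ball_pos _ _ one_pos).ne'
  constructor
  rw [sphereUniform, Measure.smul_apply, Measure.map_apply measurable_subtype_coe .univ,
    preimage_univ, smul_eq_mul]
  exact ENNReal.inv_mul_cancel hpos (measure_ne_top _ _)

lemma sphMean_zero_radius (hN : 1 ≤ N) (f : EuclideanSpace ℝ (Fin N) → ℝ)
    (x : EuclideanSpace ℝ (Fin N)) : sphMean N 0 f x = f x := by
  have := isProbabilityMeasure_sphereUniform hN
  simp [sphMean]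

lemma abs_sphMean_le (hN : 1 ≤ N) {f : EuclideanSpace ℝ (Fin N) → ℝ} {C : ℝ}
    (hf : ∀ z, |f z| ≤ C) (R : ℝ) (x : EuclideanSpace ℝ (Fin N)) :
    |sphMean N R f x| ≤ C := by
  have := isProbabilityMeasure_sphereUniform hN
  simpa [sphMean] using norm_integral_le_of_norm_le_const (μ := sphereUniform N)
    (Eventually.of_forall fun y => (Real.norm_eq_abs _).trans_le (hf (x + R • y)))

lemma abs_iterate_sphMean_le (hN : 1 ≤ N) {f : EuclideanSpace ℝ (Fin N) → ℝ} {C : ℝ}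
    (hf : ∀ z, |f z| ≤ C) (R : ℝ) (m : ℕ) (z : EuclideanSpace ℝ (Fin N)) :
    |(sphMean N R)^[m] f z| ≤ C := by
  induction m generalizing z with
  | zero => exact hf z
  | succ m ih => rw [Function.iterate_succ_apply']; exact abs_sphMean_le hN ih R z

variable {X : Type*} [TopologicalSpace X] [FirstCountableTopology X] {s : Set X}

lemma continuousOn_sphMean (hN : 1 ≤ N) {g : X → EuclideanSpace ℝ (Fin N) → ℝ} {C : ℝ}
    (hg : ContinuousOn (fun q : X × EuclideanSpace ℝ (Fin N) => g q.1 q.2) (s ×ˢ univ))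
    (hb : ∀ a ∈ s, ∀ z, |g a z| ≤ C) {ρ : X → ℝ} (hρ : ContinuousOn ρ s)
    {p : X → EuclideanSpace ℝ (Fin N)} (hp : ContinuousOn p s) :
    ContinuousOn (fun a => sphMean N (ρ a) (g a) (p a)) s := by
  have := isProbabilityMeasure_sphereUniform hN
  refine continuousOn_of_dominated (bound := fun _ => C) (fun a ha => ?_)
    (fun a ha => Eventually.of_forall fun y => by simpa using hb a ha _) (integrable_const C)
    (Eventually.of_forall fun y => ?_)
  · refine (continuousOn_univ.mp ?_).aestronglyMeasurable
    exact hg.comp (f := fun y => (a, p a + ρ a • y)) (by fun_prop) fun _ _ => ⟨ha, mem_univ _⟩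
  · exact hg.comp (continuousOn_id.prodMk (hp.add (hρ.smul continuousOn_const)))
      fun a ha => ⟨ha, mem_univ _⟩

lemma continuousOn_iterate_sphMean (hN : 1 ≤ N) {g : X → EuclideanSpace ℝ (Fin N) → ℝ} {C : ℝ}
    (hg : ContinuousOn (fun q : X × EuclideanSpace ℝ (Fin N) => g q.1 q.2) (s ×ˢ univ))
    (hb : ∀ a ∈ s, ∀ z, |g a z| ≤ C) (R : ℝ) (m : ℕ) :
    ContinuousOn (fun q : X × EuclideanSpace ℝ (Fin N) => (sphMean N R)^[m] (g q.1) q.2)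
      (s ×ˢ univ) := by
  induction m with
  | zero => exact hg
  | succ m ih =>
    simp only [Function.iterate_succ_apply']
    have hmaps : MapsTo (fun w : (X × EuclideanSpace ℝ (Fin N)) × EuclideanSpace ℝ (Fin N) =>
        (w.1.1, w.2)) ((s ×ˢ univ) ×ˢ univ) (s ×ˢ univ) :=
      fun _ hw => ⟨hw.1.1, mem_univ _⟩
    exact continuousOn_sphMean hN (ih.comp (by fun_prop) hmaps)
      (fun q hq => abs_iterate_sphMean_le hN (hb q.1 hq.1) R m) continuousOn_const
      continuousOn_snd

end SphericalMean

lemma natCeil_sub_one_eq_iff {y : ℝ} (hy : 0 < y) (m : ℕ) :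
    ⌈y⌉₊ - 1 = m ↔ y ∈ Ioc (m : ℝ) (m + 1) := by
  have hceil : ⌈y⌉₊ ≠ 0 := (Nat.ceil_pos.mpr hy).ne'
  have hiff := Nat.ceil_eq_iff (a := y) (m.succ_ne_zero)
  rw [Nat.succ_sub_one, Nat.cast_succ] at hiff
  rw [mem_Ioc, ← hiff]
  omega

lemma continuousOn_natCeil_sub_one_glue {X α : Type*} [TopologicalSpace X] [TopologicalSpace α]
    {s : Set X} (hs : IsOpen s) {r : X → ℝ} (hr : ContinuousOn r s) (hr0 : ∀ a ∈ s, 0 < r a)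
    {F : ℕ → X → α} (hF : ∀ m, ContinuousOn (F m) s)
    (hglue : ∀ m : ℕ, ∀ a ∈ s, r a = m + 1 → F m a = F (m + 1) a) :
    ContinuousOn (fun a => F (⌈r a⌉₊ - 1) a) s := by
  intro a₀ ha₀
  have hs₀ : s ∈ 𝓝 a₀ := hs.mem_nhds ha₀
  have hr₀ : ContinuousAt r a₀ := hr.continuousAt hs₀
  have hF₀ : ∀ m, ContinuousAt (F m) a₀ := fun m => (hF m).continuousAt hs₀
  refine ContinuousAt.continuousWithinAt ?_
  set m := ⌈r a₀⌉₊ - 1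
  obtain ⟨hm_lt, hm_le⟩ := (natCeil_sub_one_eq_iff (hr0 a₀ ha₀) m).mp rfl
  have hgt : ∀ᶠ a in 𝓝 a₀, (m : ℝ) < r a := hr₀.eventually (Ioi_mem_nhds hm_lt)
  rcases hm_le.lt_or_eq with hm_lt' | hm_eq
  · refine (hF₀ m).congr ?_
    filter_upwards [hs₀, hgt, hr₀.eventually (Iio_mem_nhds hm_lt')] with a ha h₁ h₂
    rw [(natCeil_sub_one_eq_iff (hr0 a ha) m).mpr ⟨h₁, h₂.le⟩]
  · have hlocal : ∀ᶠ a in 𝓝 a₀,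
        (if r a ≤ m + 1 then F m a else F (m + 1) a) = F (⌈r a⌉₊ - 1) a := by
      filter_upwards [hs₀, hgt, hr₀.eventually (Iio_mem_nhds (by linarith : r a₀ < m + 2))]
        with a ha h₁ h₂
      split_ifs with h
      · rw [(natCeil_sub_one_eq_iff (hr0 a ha) m).mpr ⟨h₁, h⟩]
      · have hIoc : r a ∈ Ioc ((m + 1 : ℕ) : ℝ) ((m + 1 : ℕ) + 1) := by
          push_cast; exact ⟨not_le.mp h, by linarith⟩
        rw [(natCeil_sub_one_eq_iff (hr0 a ha) (m + 1)).mpr hIoc]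
    have hval : F (⌈r a₀⌉₊ - 1) a₀ = F m a₀ := rfl
    rw [ContinuousAt, hval]
    refine Tendsto.congr' hlocal (Tendsto.if ((hF₀ m).tendsto.mono_left inf_le_left) ?_)
    rw [hglue m a₀ ha₀ hm_eq]
    exact (hF₀ (m + 1)).tendsto.mono_left inf_le_left

theorem stmt_19_general (N : ℕ) (hN : 1 ≤ N) (lam cstar : ℝ)
    (hlam : 0 < lam)
    (u : ℝ → EuclideanSpace ℝ (Fin N) → ℝ)
    (huc : ContinuousOn (fun p : ℝ × EuclideanSpace ℝ (Fin N) => u p.1 p.2)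
      (Set.Ioo 0 cstar ×ˢ Set.univ))
    (hub : ∃ C : ℝ, ∀ c ∈ Set.Ioo (0 : ℝ) cstar, ∀ x, |u c x| ≤ C)
    (x : EuclideanSpace ℝ (Fin N)) (t : ℝ) (ht : 0 < t) :
    ContinuousOn
      (fun c => sphMean N (c * (t - stepIndex (lam / c) t * (lam / c)))
        ((sphMean N lam)^[stepIndex (lam / c) t] (u c)) x)
      (Set.Ioo 0 cstar) := by
  obtain ⟨C, hC⟩ := hub
  set Φ : ℕ → ℝ → ℝ := fun m c =>
    sphMean N (c * t - m * lam) ((sphMean N lam)^[m] (u c)) x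
  have hΦ (m : ℕ) : ContinuousOn (Φ m) (Ioo 0 cstar) :=
    continuousOn_sphMean hN (continuousOn_iterate_sphMean hN huc hC lam m)
      (fun c hc => abs_iterate_sphMean_le hN (hC c hc) lam m) (by fun_prop) continuousOn_const
  have hglue (m : ℕ) (c : ℝ) (_ : c ∈ Ioo 0 cstar) (hc : t * c / lam = m + 1) :
      Φ m c = Φ (m + 1) c := by
    have hct : c * t = (m + 1) * lam := by rw [div_eq_iff hlam.ne'] at hc; linarith
    have hrad : c * t - m * lam = lam := by linarith
    have h₀ : c * t - ((m + 1 : ℕ) : ℝ) * lam = 0 := by push_cast; linarith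
    simp only [Φ, hrad, h₀, sphMean_zero_radius hN, Function.iterate_succ_apply']
  refine (continuousOn_natCeil_sub_one_glue isOpen_Ioo (by fun_prop)
    (fun c hc => by have := hc.1; positivity) hΦ hglue).congr fun c hc => ?_
  have hc₀ : c ≠ 0 := hc.1.ne'
  simp only [Φ, stepIndex, div_div_eq_mul_div, mul_sub, mul_left_comm c, mul_div_cancel₀ _ hc₀]

/-- For a family of causal diffusions sharing the same wave length `λ = c τ_c`
(so `τ_c = λ / c`) with jointly continuous bounded initial data `u_c`, the map
`c ↦ v_c(x,t)` is continuous on `(0, c*)` for each fixed `x` and `t > 0`. -/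
theorem stmt_19 (N : ℕ) (hN : 1 ≤ N) (lam cstar : ℝ)
    (hlam : 0 < lam) (hcstar : 0 < cstar)
    (u : ℝ → EuclideanSpace ℝ (Fin N) → ℝ)
    (huc : ContinuousOn (fun p : ℝ × EuclideanSpace ℝ (Fin N) => u p.1 p.2)
      (Set.Ioo 0 cstar ×ˢ Set.univ))
    (hub : ∃ C : ℝ, ∀ c ∈ Set.Ioo (0 : ℝ) cstar, ∀ x, |u c x| ≤ C)
    (x : EuclideanSpace ℝ (Fin N)) (t : ℝ) (ht : 0 < t) :
    ContinuousOn
      (fun c => sphMean N (c * (t - stepIndex (lam / c) t * (lam / c)))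
        ((sphMean N lam)^[stepIndex (lam / c) t] (u c)) x)
      (Set.Ioo 0 cstar) :=
  stmt_19_general N hN lam cstar hlam u huc hub x t ht
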